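/- For every ξ ∈ ∂F and n ≥ 1, the number of elements of the horosphere H_ξ of word length exactly 2n equals (2r-2)(2r-1)^{n-1}, and the number of elements of H_ξ of word length at most 2n equals (2r-1)^n. -/

import Mathlib

/-- The symmetric generating set of the free group of rank `r`. -/
abbrev Letter (r : ℕ) := Fin r × Bool

/-- The inverse of a letter. -/
def Letter.inv {r : ℕ} (s : Letter r) : Letter r := (s.1, !s.2)

/-- The boundary of the free group of rank `r`. -/
abbrev Boundary (r : ℕ) := {ξ : ℕ → Letter r // ∀ i, ξ (i + 1) ≠ Letter.inv (ξ i)}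

/-- The initial segment `ξ₁⋯ξₖ` of a boundary point, as a word. -/
def prefixList {r : ℕ} (ξ : Boundary r) (k : ℕ) : List (Letter r) :=
  List.ofFn (fun i : Fin k => ξ.1 i)

/-- Membership in the horosphere `H_ξ` through the identity: `g = ξ₁⋯ξₖ t₁⋯tₖ` in reduced
form with `t₁ ≠ ξ_{k+1}`. -/
def InHoro {r : ℕ} (ξ : Boundary r) (g : FreeGroup (Fin r)) : Prop :=
  ∃ k : ℕ, ∃ t : List (Letter r),
    FreeGroup.toWord g = prefixList ξ k ++ t ∧ t.length = k ∧ ∀ a ∈ t.head?, a ≠ ξ.1 k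

/-!
An element of `H_ξ` of length `2k` is `ξ₁⋯ξₖ t` with `t` reduced of length `k`, whose first
letter must avoid `ξₖ₊₁` (definition of `H_ξ`) and `ξₖ⁻¹` (reducedness). As `ξₖ₊₁ ≠ ξₖ⁻¹`,
this leaves `2r - 2` choices for `t₁` and `2r - 1` for each later letter. Lengths in `H_ξ` are
even, so the ball of radius `2n` is `{1}` together with the spheres of radii `2, 4, …, 2n`, and
`1 + (2r - 2) ∑_{k<n} (2r - 1)^k = (2r - 1)^n`.
-/

namespace FreeGroup

variable {α : Type*}

theorem fst_eq_imp_snd_eq_iff_ne {a b : α × Bool} : (a.1 = b.1 → a.2 = b.2) ↔ b ≠ (a.1, !a.2) := by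
  obtain ⟨x, c⟩ := a; obtain ⟨y, d⟩ := b
  cases c <;> cases d <;> simp [eq_comm]

theorem isReduced_cons_iff {a : α × Bool} {t : List (α × Bool)} :
    IsReduced (a :: t) ↔ (∀ b ∈ t.head?, b ≠ (a.1, !a.2)) ∧ IsReduced t := by
  simp only [IsReduced, List.isChain_cons, fst_eq_imp_snd_eq_iff_ne]

theorem finite_of_length_toWord_le [Finite α] [DecidableEq α] {p : FreeGroup α → Prop} (n : ℕ)
    (h : ∀ g, p g → g.toWord.length ≤ n) : Finite {g // p g} :=
  (((List.finite_length_le (α × Bool) n).preimage toWord_injective.injOn).subset h).to_subtype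

variable (α) in
def ReducedWord (m : ℕ) (P : α × Bool → Prop) : Type _ :=
  {t : List (α × Bool) // t.length = m ∧ IsReduced t ∧ ∀ a ∈ t.head?, P a}

namespace ReducedWord

instance [Finite α] (m : ℕ) (P : α × Bool → Prop) : Finite (ReducedWord α m P) :=
  ((List.finite_length_eq (α × Bool) m).subset fun _ h => h.1).to_subtype

def consEquiv (m : ℕ) (P : α × Bool → Prop) :
    ReducedWord α (m + 1) P ≃ Σ a : {a // P a}, ReducedWord α m (· ≠ (a.1.1, !a.1.2)) where
  toFun
    | ⟨[], h⟩ => absurd h.1 (List.length_nil ▸ (Nat.succ_ne_zero m).symm)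
    | ⟨a :: t, h⟩ =>
      ⟨⟨a, h.2.2 a rfl⟩, t, Nat.succ.inj h.1, (isReduced_cons_iff.1 h.2.1).2,
        (isReduced_cons_iff.1 h.2.1).1⟩
  invFun p := ⟨p.1.1 :: p.2.1, by rw [List.length_cons, p.2.2.1],
    isReduced_cons_iff.2 ⟨p.2.2.2.2, p.2.2.2.1⟩, fun b hb => Option.some_inj.1 hb ▸ p.1.2⟩
  left_inv
    | ⟨[], h⟩ => absurd h.1 (List.length_nil ▸ (Nat.succ_ne_zero m).symm)
    | ⟨_ :: _, _⟩ => rfl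
  right_inv _ := rfl

theorem card_zero (P : α × Bool → Prop) : Nat.card (ReducedWord α 0 P) = 1 :=
  Nat.card_eq_one_iff_unique.2
    ⟨⟨fun s t => Subtype.ext <| (List.length_eq_zero_iff.1 s.2.1).trans
      (List.length_eq_zero_iff.1 t.2.1).symm⟩, ⟨⟨[], rfl, IsReduced.nil, by simp⟩⟩⟩

variable [Fintype α]

theorem card_succ_of_forall {m N : ℕ} (P : α × Bool → Prop) [DecidablePred P]
    (h : ∀ a : α × Bool, Nat.card (ReducedWord α m (· ≠ (a.1, !a.2))) = N) :
    Nat.card (ReducedWord α (m + 1) P) = Fintype.card {a // P a} * N := by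
  rw [Nat.card_congr (consEquiv m P), Nat.card_sigma]
  simp only [h, Finset.sum_const, Finset.card_univ, smul_eq_mul]

variable [DecidableEq α]

theorem card_ne (m : ℕ) (c : α × Bool) :
    Nat.card (ReducedWord α m (· ≠ c)) = (2 * Fintype.card α - 1) ^ m := by
  induction m generalizing c with
  | zero => rw [card_zero, pow_zero]
  | succ m ih =>
    rw [card_succ_of_forall _ fun a => ih _, Fintype.card_subtype_compl, Fintype.card_subtype_eq,
      Fintype.card_prod, Fintype.card_bool, mul_comm (Fintype.card α), pow_succ']

theorem card_ne_ne (m : ℕ) {c d : α × Bool} (hcd : c ≠ d) :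
    Nat.card (ReducedWord α (m + 1) (fun a => a ≠ c ∧ a ≠ d)) =
      (2 * Fintype.card α - 2) * (2 * Fintype.card α - 1) ^ m := by
  have hcard : Fintype.card {a : α × Bool // a ≠ c ∧ a ≠ d} = 2 * Fintype.card α - 2 := by
    have hpair : (Finset.univ.filter fun a : α × Bool => a ≠ c ∧ a ≠ d) = {c, d}ᶜ := by
      ext; simp
    rw [Fintype.card_subtype, hpair, Finset.card_compl, Finset.card_pair hcd, Fintype.card_prod,
      Fintype.card_bool, mul_comm (Fintype.card α)]
  rw [card_succ_of_forall _ fun a => card_ne m _, hcard]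

end ReducedWord

end FreeGroup

open FreeGroup

section Horosphere

variable {r : ℕ} (ξ : Boundary r)

theorem prefixList_succ (k : ℕ) : prefixList ξ (k + 1) = prefixList ξ k ++ [ξ.1 k] := by
  rw [prefixList, List.ofFn_succ', List.concat_eq_append]
  rfl

theorem isReduced_prefixList (k : ℕ) : IsReduced (prefixList ξ k) :=
  List.isChain_ofFn.2 fun i _ => fst_eq_imp_snd_eq_iff_ne.2 (ξ.2 i)

theorem isReduced_prefixList_succ_append_iff (k : ℕ) {t : List (Letter r)} :
    IsReduced (prefixList ξ (k + 1) ++ t) ↔ IsReduced t ∧ ∀ a ∈ t.head?, a ≠ (ξ.1 k).inv := by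
  have hξ := isReduced_prefixList ξ (k + 1)
  unfold FreeGroup.IsReduced at hξ ⊢
  rw [List.isChain_append, and_iff_right hξ]
  simp [prefixList_succ, fst_eq_imp_snd_eq_iff_ne, Letter.inv]

theorem length_prefixList_append {k : ℕ} {t : List (Letter r)} (hl : t.length = k) :
    (prefixList ξ k ++ t).length = 2 * k := by
  simp [prefixList, hl, two_mul]

theorem even_length_toWord_of_inHoro {g : FreeGroup (Fin r)} (hg : InHoro ξ g) :
    Even g.toWord.length := by
  obtain ⟨k, t, hw, hl, -⟩ := hg
  exact ⟨k, by rw [hw, length_prefixList_append ξ hl, two_mul]⟩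

theorem toWord_mk_prefixList_succ_append (k : ℕ) {t : List (Letter r)} (ht : IsReduced t)
    (hhead : ∀ a ∈ t.head?, a ≠ (ξ.1 k).inv) :
    (mk (prefixList ξ (k + 1) ++ t)).toWord = prefixList ξ (k + 1) ++ t := by
  rw [toWord_mk]
  exact ((isReduced_prefixList_succ_append_iff ξ k).2 ⟨ht, hhead⟩).reduce_eq

theorem inHoro_one : InHoro ξ 1 :=
  ⟨0, [], by simp [prefixList], rfl, by simp⟩

theorem card_horosphere_sphere (k : ℕ) :
    Nat.card {g : FreeGroup (Fin r) // InHoro ξ g ∧ g.toWord.length = 2 * (k + 1)} =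
      (2 * r - 2) * (2 * r - 1) ^ k := by
  let Tail := ReducedWord (Fin r) (k + 1) (fun a => a ≠ ξ.1 (k + 1) ∧ a ≠ (ξ.1 k).inv)
  have hw (t : Tail) : (mk (prefixList ξ (k + 1) ++ t.1)).toWord = prefixList ξ (k + 1) ++ t.1 :=
    toWord_mk_prefixList_succ_append ξ k t.2.2.1 fun a ha => (t.2.2.2 a ha).2
  let f : Tail → {g : FreeGroup (Fin r) // InHoro ξ g ∧ g.toWord.length = 2 * (k + 1)} :=
    fun t => ⟨mk (prefixList ξ (k + 1) ++ t.1),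
      ⟨k + 1, t.1, hw t, t.2.1, fun a ha => (t.2.2.2 a ha).1⟩,
      by rw [hw t, length_prefixList_append ξ t.2.1]⟩
  have hf : f.Bijective := by
    refine ⟨fun s t hst => Subtype.ext <| List.append_cancel_left <|
      (hw s).symm.trans <| (congrArg (fun g => g.1.toWord) hst).trans (hw t), fun g => ?_⟩
    obtain ⟨g, ⟨k', t, hg, hl, hhead⟩, hlen⟩ := g
    obtain rfl : k' = k + 1 := by
      rw [hg, length_prefixList_append ξ hl] at hlen
      omega
    obtain ⟨hred, hinv⟩ := (isReduced_prefixList_succ_append_iff ξ k).1 (hg ▸ isReduced_toWord)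
    exact ⟨⟨t, hl, hred, fun a ha => ⟨hhead a ha, hinv a ha⟩⟩,
      Subtype.ext <| (congrArg mk hg).symm.trans mk_toWord⟩
  rw [← Nat.card_eq_of_bijective f hf, ReducedWord.card_ne_ne k (ξ.2 k), Fintype.card_fin]

theorem card_horosphere_ball (hr : 1 ≤ r) (n : ℕ) :
    Nat.card {g : FreeGroup (Fin r) // InHoro ξ g ∧ g.toWord.length ≤ 2 * n} = (2 * r - 1) ^ n := by
  classical
  induction n with
  | zero =>
    refine Nat.card_eq_one_iff_exists.2 ⟨⟨1, inHoro_one ξ, by simp⟩, fun g => Subtype.ext ?_⟩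
    simpa using g.2.2
  | succ n ih =>
    have hsplit : {g : FreeGroup (Fin r) // InHoro ξ g ∧ g.toWord.length ≤ 2 * (n + 1)} ≃
        {g : FreeGroup (Fin r) // InHoro ξ g ∧ g.toWord.length ≤ 2 * n} ⊕
          {g : FreeGroup (Fin r) // InHoro ξ g ∧ g.toWord.length = 2 * (n + 1)} := by
      refine (Equiv.subtypeEquivRight fun g => ?_).trans (subtypeOrEquiv _ _ ?_)
      · rw [← and_or_left]
        refine and_congr_right fun hg => ?_
        obtain ⟨m, hm⟩ := even_length_toWord_of_inHoro ξ hg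
        omega
      · exact Pi.disjoint_iff.2 fun g => Prop.disjoint_iff.2 fun ⟨⟨_, hle⟩, _, heq⟩ => by omega
    have := finite_of_length_toWord_le (p := fun g => InHoro ξ g ∧ g.toWord.length ≤ 2 * n) _
      fun g hg => hg.2
    have := finite_of_length_toWord_le
      (p := fun g => InHoro ξ g ∧ g.toWord.length = 2 * (n + 1)) _ fun g hg => hg.2.le
    rw [Nat.card_congr hsplit, Nat.card_sum, ih, card_horosphere_sphere,
      show 2 * r - 1 = 2 * r - 2 + 1 by omega, pow_succ]
    ring

end Horosphere

/-- For every `ξ ∈ ∂F` and `n ≥ 1`, the number of elements of the horosphere `H_ξ` of word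
length exactly `2n` equals `(2r-2)(2r-1)^{n-1}`, and the number of elements of `H_ξ` of word
length at most `2n` equals `(2r-1)^n`. -/
theorem card_horosphere_sphere_ball (r n : ℕ) (hr : 2 ≤ r) (hn : 1 ≤ n) (ξ : Boundary r) :
    Nat.card {g : FreeGroup (Fin r) // InHoro ξ g ∧ (FreeGroup.toWord g).length = 2 * n} =
        (2 * r - 2) * (2 * r - 1) ^ (n - 1) ∧
    Nat.card {g : FreeGroup (Fin r) // InHoro ξ g ∧ (FreeGroup.toWord g).length ≤ 2 * n} =
        (2 * r - 1) ^ n := by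
  obtain ⟨m, rfl⟩ : ∃ m, n = m + 1 := ⟨n - 1, by omega⟩
  exact ⟨card_horosphere_sphere ξ m, card_horosphere_ball ξ (by omega) (m + 1)⟩
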